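/- arXiv:math/0701659 — 7 statements merged into one kernel-verified Lean document; each statement's English description precedes it below -/
import Mathlib

section
/- Let G(∘) and G(∗) be two group structures on a finite set G of cardinality n, and suppose a∘b ≠ a∗b for some a, b ∈ G. Then d(a) + d(b) + d(a∘b) ≥ n, where d(g) = |{h ∈ G : g∘h ≠ g∗h}|. -/
/-!
If `h` lies in neither row `b` nor row `a ∘ b` of the disagreement, then associativity gives
`a ∘ (b ∘ h) = (a ∘ b) ∘ h = (a ∗ b) ∗ h`, while `a ∗ (b ∘ h) = a ∗ (b ∗ h) = (a ∗ b) ∗ h`; since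
`a ∘ b ≠ a ∗ b`, right cancellation in `∗` separates them, so `b ∘ h` lies in row `a`. Thus left
multiplication by `b` injects the complement of the rows of `b` and `a ∘ b` into the row of `a`.
-/
open Finset

section

variable {G : Type*}

theorem mul_ne_of_rows_agree (s : Semigroup G) (t : RightCancelSemigroup G) {a b h : G}
    (hab : s.mul a b ≠ t.mul a b) (hb : s.mul b h = t.mul b h)
    (hab_h : s.mul (s.mul a b) h = t.mul (s.mul a b) h) :
    s.mul a (s.mul b h) ≠ t.mul a (s.mul b h) := by
  intro ha
  apply hab
  apply @mul_right_cancel G t.toMul t.toIsRightCancelMul _ h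
  calc t.mul (s.mul a b) h = s.mul (s.mul a b) h := hab_h.symm
    _ = s.mul a (s.mul b h) := @mul_assoc G s a b h
    _ = t.mul a (t.mul b h) := by rw [ha, hb]
    _ = t.mul (t.mul a b) h := (@mul_assoc G t.toSemigroup a b h).symm

variable [Fintype G] [DecidableEq G]

def rowDiff (s t : Mul G) (g : G) : Finset G := {h | s.mul g h ≠ t.mul g h}

theorem mem_rowDiff {s t : Mul G} {g h : G} : h ∈ rowDiff s t g ↔ s.mul g h ≠ t.mul g h := by
  simp [rowDiff]

theorem card_le_card_rowDiff_add (s : LeftCancelSemigroup G) (t : RightCancelSemigroup G) {a b : G}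
    (hab : s.mul a b ≠ t.mul a b) :
    Fintype.card G ≤ #(rowDiff s.toMul t.toMul a) + #(rowDiff s.toMul t.toMul b) +
      #(rowDiff s.toMul t.toMul (s.mul a b)) := by
  set A := rowDiff s.toMul t.toMul a
  set B := rowDiff s.toMul t.toMul b
  set C := rowDiff s.toMul t.toMul (s.mul a b)
  have h_maps : Set.MapsTo (s.mul b) ↑(univ \ (B ∪ C)) ↑A := by
    intro h hh
    simp only [coe_sdiff, coe_univ, coe_union, Set.mem_sdiff, Set.mem_univ, Set.mem_union, mem_coe,
      not_or, true_and, B, C, A, mem_rowDiff, not_not] at hh ⊢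
    exact mul_ne_of_rows_agree s.toSemigroup t hab hh.1 hh.2
  have h_inj : Set.InjOn (s.mul b) ↑(univ \ (B ∪ C)) :=
    fun _ _ _ _ => @mul_left_cancel G s.toMul s.toIsLeftCancelMul _ _ _
  calc Fintype.card G = #(B ∪ C) + #(univ \ (B ∪ C)) := by
        rw [card_sdiff_of_subset (subset_univ _), card_univ, add_tsub_cancel_of_le (card_le_univ _)]
    _ ≤ #B + #C + #A := add_le_add (card_union_le B C) (card_le_card_of_injOn _ h_maps h_inj)
    _ = #A + #B + #C := by ring

end

theorem row_distance_bound {G : Type*} [Fintype G] [DecidableEq G]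
    (s t : Group G)
    (d : G → ℕ)
    (hd : ∀ g, d g = (Finset.univ.filter fun h : G => s.mul g h ≠ t.mul g h).card)
    (a b : G) (hab : s.mul a b ≠ t.mul a b) :
    Fintype.card G ≤ d a + d b + d (s.mul a b) := by
  rw [hd, hd, hd]
  exact card_le_card_rowDiff_add (@Group.toCancelMonoid G s).toLeftCancelSemigroup
    (@Group.toCancelMonoid G t).toRightCancelSemigroup hab
end

section
/- Let G(∘) and G(∗) be two group structures on a finite set G of odd cardinality n. Then for every g ∈ G, d(g) ≠ 2, where d(g) = |{h ∈ G : g∘h ≠ g∗h}|. -/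
/-!
Left multiplication by `g` is a permutation of `G` whose order divides the odd number `|G|`, so
it is even, for either group law. If the two laws disagreed at exactly two points `h`, the
permutation `h ↦ g ∗⁻¹ (g ∘ h)` would be a transposition, yet it is a quotient of two even
permutations.
-/

namespace Equiv.Perm

variable {α : Type*} [Fintype α] [DecidableEq α]

theorem sign_eq_one_of_pow_eq_one_of_odd {σ : Perm α} {n : ℕ} (hn : Odd n) (hσ : σ ^ n = 1) :
    sign σ = 1 := by
  rw [← pow_one (sign σ), ← Nat.odd_iff.mp hn, ← Int.units_pow_eq_pow_mod_two, ← map_pow, hσ,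
    map_one]

theorem support_inv_mul_eq_filter_ne (σ τ : Perm α) :
    (τ⁻¹ * σ).support = Finset.univ.filter fun x => σ x ≠ τ x := by
  ext x
  simp [Equiv.eq_symm_apply, eq_comm]

theorem card_filter_ne_ne_two_of_sign_eq {σ τ : Perm α} (h : sign σ = sign τ) :
    (Finset.univ.filter fun x => σ x ≠ τ x).card ≠ 2 := by
  intro hcard
  have hswap : (τ⁻¹ * σ).IsSwap := by
    rw [← card_support_eq_two, support_inv_mul_eq_filter_ne, hcard]
  have heven : sign (τ⁻¹ * σ) = 1 := by rw [map_mul, map_inv, h, inv_mul_cancel]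
  exact absurd (hswap.sign_eq.symm.trans heven) (by decide)

theorem sign_mulLeft_of_odd_card {G : Type*} [Group G] [Fintype G] [DecidableEq G]
    (hodd : Odd (Fintype.card G)) (g : G) : sign (Equiv.mulLeft g) = 1 :=
  sign_eq_one_of_pow_eq_one_of_odd hodd <| by
    rw [Equiv.pow_mulLeft, pow_card_eq_one, Equiv.mulLeft_one]

end Equiv.Perm

theorem d_ne_two_of_odd {G : Type*} [Fintype G] [DecidableEq G]
    (s t : Group G) (hodd : Odd (Fintype.card G)) (g : G) :
    (Finset.univ.filter fun h : G => s.mul g h ≠ t.mul g h).card ≠ 2 :=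
  Equiv.Perm.card_filter_ne_ne_two_of_sign_eq (σ := @Equiv.mulLeft G s g)
    (τ := @Equiv.mulLeft G t g) <|
    (@Equiv.Perm.sign_mulLeft_of_odd_card G s _ _ hodd g).trans
      (@Equiv.Perm.sign_mulLeft_of_odd_card G t _ _ hodd g).symm
end

section
/- Let G(∘) and G(∗) be two group structures on a finite set G. Suppose a ∈ G is such that its inverse a⁻¹ in G(∘) differs from its inverse a^∗ in G(∗). If b ∈ G satisfies a∘b = a∗b = c, then a^∗∘c ≠ a^∗∗c. Consequently d(a) + d(a^∗) ≥ |G| for any such a, where d(g) = |{h ∈ G : g∘h ≠ g∗h}|. -/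
section aux

variable {G : Type*}

lemma aux_inv_mul_cancel_left (s : Group G) (a b : G) :
    s.mul (s.inv a) (s.mul a b) = b := by
  letI := s
  exact inv_mul_cancel_left a b

lemma aux_assoc (s : Group G) (x y z : G) :
    s.mul (s.mul x y) z = s.mul x (s.mul y z) := by
  letI := s
  exact mul_assoc x y z

lemma aux_eq_inv (s : Group G) (x a : G) (h : s.mul x a = s.one) :
    x = s.inv a := by
  letI := s
  exact eq_inv_of_mul_eq_one_left h

lemma aux_eq_one (s : Group G) (x b : G) (h : s.mul x b = b) :
    x = s.one := by
  letI := s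
  have h2 : x * b = 1 * b := by rw [one_mul]; exact h
  exact mul_right_cancel h2

lemma aux_mul_inj (s : Group G) (a : G) :
    Function.Injective (fun b => s.mul a b) := by
  letI := s
  exact mul_right_injective a

end aux

theorem differing_inverse_rows {G : Type*} [Fintype G] [DecidableEq G]
    (s t : Group G)
    (d : G → ℕ)
    (hd : ∀ g, d g = (Finset.univ.filter fun h : G => s.mul g h ≠ t.mul g h).card)
    (a : G) (ha : s.inv a ≠ t.inv a) :
    (∀ b c : G, s.mul a b = c → t.mul a b = c →
        s.mul (t.inv a) c ≠ t.mul (t.inv a) c) ∧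
    Fintype.card G ≤ d a + d (t.inv a) := by
  have key : ∀ b c : G, s.mul a b = c → t.mul a b = c →
      s.mul (t.inv a) c ≠ t.mul (t.inv a) c := by
    intro b c h1 h2 heq
    have htb : t.mul (t.inv a) c = b := by
      rw [← h2]; exact aux_inv_mul_cancel_left t a b
    have hsb : s.mul (s.mul (t.inv a) a) b = b := by
      rw [aux_assoc s (t.inv a) a b, h1, heq, htb]
    have hone : s.mul (t.inv a) a = s.one := aux_eq_one s _ b hsb
    exact ha (aux_eq_inv s _ a hone).symm
  refine ⟨key, ?_⟩
  classical
  have hsplit :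
      (Finset.univ.filter fun b : G => s.mul a b ≠ t.mul a b).card
      + (Finset.univ.filter fun b : G => ¬ (s.mul a b ≠ t.mul a b)).card
      = Fintype.card G := by
    simpa using Finset.card_filter_add_card_filter_not
      (s := (Finset.univ : Finset G)) (p := fun b : G => s.mul a b ≠ t.mul a b)
  have hinj : (Finset.univ.filter fun b : G => ¬ (s.mul a b ≠ t.mul a b)).card
      ≤ d (t.inv a) := by
    rw [hd]
    apply Finset.card_le_card_of_injOn (fun b => s.mul a b)
    · intro b hb
      simp only [Finset.mem_coe, Finset.mem_filter, Finset.mem_univ, true_and, not_not] at hb ⊢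
      exact key b (s.mul a b) rfl hb.symm
    · intro x _ y _ h
      exact aux_mul_inj s a h
  rw [hd a]
  omega
end

section
/- Let G(∘) and G(∗) be two group structures on a finite set G of cardinality n > 7 with dist(G(∘),G(∗)) ≤ 6n − 18, where G(∘) and G(∗) are isomorphic. Then the identity elements of G(∘) and G(∗) coincide: 1_{G(∘)} = 1_{G(∗)}. -/
/-!
Suppose `s.one ≠ t.one` and let `I` be the set of the other `n - 2` elements. Every cell in the
row or the column of either identity disagrees, which gives `4n - 4` disagreements; it remains to
find `2n - 12` of them in `I × I`.

Call a cell `(u, v)` of `I × I` special if `u v ∈ {s.one, t.one}`. There are at least `2n - 8`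
special cells, so we are done unless two of them agree. If a special cell `(u, v)` agrees, then
for every `c` one of `(v, c)` and `(u, v c)` disagrees: otherwise associativity of both products
would make the cell `(u v, c)`, which lies in an identity row, agree. This gives `n - 4`
disagreements in the rows `u, v` (only half as many in row `u` when `u = v`, which is why two
diagonal special cells are needed), and, passing to the opposite group structures, as many in the
columns `u, v`; at most four cells are counted twice.
-/

open Finset

namespace GroupTable

variable {G : Type*}

abbrev opposite (s : Group G) : Group G := letI := s; MulOpposite.opEquiv.group

@[simp] theorem opposite_mul (s : Group G) (a b : G) : (opposite s).mul a b = s.mul b a := rfl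

@[simp] theorem opposite_one (s : Group G) : (opposite s).one = s.one := rfl

theorem mul_agree_of_agree (s t : Group G) {u v c : G} (huv : s.mul u v = t.mul u v)
    (hvc : s.mul v c = t.mul v c) (hu : s.mul u (s.mul v c) = t.mul u (s.mul v c)) :
    s.mul (s.mul u v) c = t.mul (s.mul u v) c :=
  calc s.mul (s.mul u v) c = s.mul u (s.mul v c) := s.mul_assoc u v c
    _ = t.mul u (t.mul v c) := by rw [hu, hvc]
    _ = t.mul (t.mul u v) c := (t.mul_assoc u v c).symm
    _ = t.mul (s.mul u v) c := by rw [huv]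

theorem card_le_card_filter_map_mem_add_card_compl {α : Type*} [Fintype α] [DecidableEq α]
    {σ : α → α} (hσ : σ.Injective) (A : Finset α) :
    #A ≤ #{a ∈ A | σ a ∈ A} + #Aᶜ := by
  rw [← card_filter_add_card_filter_not (s := A) (fun a => σ a ∈ A)]
  have : #{a ∈ A | σ a ∉ A} ≤ #Aᶜ :=
    card_le_card_of_injOn σ (fun a ha => by simp_all) hσ.injOn
  omega

theorem card_filter_fst_mem_add_card_filter_snd_mem_le {α : Type*} [DecidableEq α]
    (P : Finset (α × α)) (R : Finset α) :
    #{p ∈ P | p.1 ∈ R} + #{p ∈ P | p.2 ∈ R} ≤ #P + #R * #R := by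
  rw [← card_union_add_card_inter, ← card_product]
  gcongr
  · exact union_subset (filter_subset _ _) (filter_subset _ _)
  · intro p hp
    simp only [mem_inter, mem_filter] at hp
    exact mem_product.2 ⟨hp.1.2, hp.2.2⟩

section Finite

variable [Fintype G] [DecidableEq G] (s t : Group G)

def disagreements : Finset (G × G) := {p | s.mul p.1 p.2 ≠ t.mul p.1 p.2}

def nonIdentities : Finset G := {s.one, t.one}ᶜ

def interiorDisagreements : Finset (G × G) :=
  disagreements s t ∩ nonIdentities s t ×ˢ nonIdentities s t

@[simp] theorem mem_disagreements {p : G × G} :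
    p ∈ disagreements s t ↔ s.mul p.1 p.2 ≠ t.mul p.1 p.2 := by
  simp [disagreements]

@[simp] theorem mem_nonIdentities {a : G} :
    a ∈ nonIdentities s t ↔ a ≠ s.one ∧ a ≠ t.one := by
  simp [nonIdentities]

theorem card_compl_nonIdentities (h : s.one ≠ t.one) : #(nonIdentities s t)ᶜ = 2 := by
  simp [nonIdentities, h]

theorem card_nonIdentities_add_two (h : s.one ≠ t.one) :
    #(nonIdentities s t) + 2 = Fintype.card G := by
  rw [← card_compl_nonIdentities s t h, add_comm, card_compl_add_card]

theorem mk_mem_disagreements_of_notMem_left (h : s.one ≠ t.one) {a : G}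
    (ha : a ∉ nonIdentities s t) (b : G) : (a, b) ∈ disagreements s t := by
  simp only [mem_nonIdentities, not_and_or, not_not] at ha
  rw [mem_disagreements]
  intro hab
  rcases ha with rfl | rfl
  · let _ := t
    exact h (mul_right_cancel ((hab.symm.trans (s.one_mul b)).trans (t.one_mul b).symm))
  · let _ := s
    have e : s.mul s.one b = s.mul t.one b :=
      (s.one_mul b).trans ((t.one_mul b).symm.trans hab.symm)
    exact h (mul_right_cancel e)

theorem mk_mem_disagreements_of_notMem_right (h : s.one ≠ t.one) {b : G}
    (hb : b ∉ nonIdentities s t) (a : G) : (a, b) ∈ disagreements s t := by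
  simpa using mk_mem_disagreements_of_notMem_left (opposite s) (opposite t) h hb a

theorem mem_disagreements_or_of_agree (h : s.one ≠ t.one) {u v : G}
    (huv : s.mul u v = t.mul u v) (hsp : s.mul u v ∉ nonIdentities s t) (c : G) :
    (v, c) ∈ disagreements s t ∨ (u, s.mul v c) ∈ disagreements s t := by
  by_contra! hc
  simp only [mem_disagreements, not_not] at hc
  exact (mem_disagreements s t).1 (mk_mem_disagreements_of_notMem_left s t h hsp c)
    (mul_agree_of_agree s t huv hc.1 hc.2)

def rowCell (u v c : G) : G × G :=
  if (v, c) ∈ disagreements s t then (v, c) else (u, s.mul v c)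

theorem rowCell_eq_or (u v c : G) :
    rowCell s t u v c = (v, c) ∨ rowCell s t u v c = (u, s.mul v c) := by
  unfold rowCell
  split_ifs <;> simp

variable {s t}

theorem card_filter_fst_interiorDisagreements_opposite (R : Finset G) :
    #{p ∈ interiorDisagreements (opposite s) (opposite t) | p.1 ∈ R} =
      #{p ∈ interiorDisagreements s t | p.2 ∈ R} :=
  card_nbij' Prod.swap Prod.swap (fun p hp => by simp_all [interiorDisagreements])
    (fun p hp => by simp_all [interiorDisagreements]) (fun _ _ => rfl) (fun _ _ => rfl)

theorem rowCell_mem (h : s.one ≠ t.one) {u v c : G} (hu : u ∈ nonIdentities s t)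
    (hv : v ∈ nonIdentities s t) (huv : s.mul u v = t.mul u v)
    (hsp : s.mul u v ∉ nonIdentities s t) (hc : c ∈ nonIdentities s t)
    (hvc : s.mul v c ∈ nonIdentities s t) :
    rowCell s t u v c ∈ {p ∈ interiorDisagreements s t | p.1 ∈ ({u, v} : Finset G)} := by
  unfold rowCell
  split_ifs with hd
  · simp_all [interiorDisagreements]
  · have := (mem_disagreements_or_of_agree s t h huv hsp c).resolve_left hd
    simp_all [interiorDisagreements]

theorem card_nonIdentities_le_card_rows (h : s.one ≠ t.one) {u v : G}
    (hu : u ∈ nonIdentities s t) (hv : v ∈ nonIdentities s t) (hne : u ≠ v)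
    (huv : s.mul u v = t.mul u v) (hsp : s.mul u v ∉ nonIdentities s t) :
    #(nonIdentities s t) ≤
      #{p ∈ interiorDisagreements s t | p.1 ∈ ({u, v} : Finset G)} + 2 := by
  have hW := card_le_card_filter_map_mem_add_card_compl
    (by let _ := s; exact mul_right_injective v : (s.mul v).Injective) (nonIdentities s t)
  have hinj : Set.InjOn (rowCell s t u v)
      ({c ∈ nonIdentities s t | s.mul v c ∈ nonIdentities s t} : Finset G) := by
    intro c _ c' _ hcc
    rcases rowCell_eq_or s t u v c with hc | hc <;>
      rcases rowCell_eq_or s t u v c' with hc' | hc' <;>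
      rw [hc, hc', Prod.mk.injEq] at hcc
    · exact hcc.2
    · exact absurd hcc.1.symm hne
    · exact absurd hcc.1 hne
    · let _ := s; exact mul_left_cancel hcc.2
  have := card_le_card_of_injOn _
    (fun c hc => rowCell_mem h hu hv huv hsp (mem_filter.1 hc).1 (mem_filter.1 hc).2) hinj
  rw [card_compl_nonIdentities s t h] at hW
  omega

theorem card_nonIdentities_le_two_mul_card_row (h : s.one ≠ t.one) {u : G}
    (hu : u ∈ nonIdentities s t) (huu : s.mul u u = t.mul u u)
    (hsp : s.mul u u ∉ nonIdentities s t) :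
    #(nonIdentities s t) ≤
      2 * #{p ∈ interiorDisagreements s t | p.1 ∈ ({u} : Finset G)} + 2 := by
  have hW := card_le_card_filter_map_mem_add_card_compl
    (by let _ := s; exact mul_right_injective u : (s.mul u).Injective) (nonIdentities s t)
  have hfib : ∀ p, #{c ∈ {c ∈ nonIdentities s t | s.mul u c ∈ nonIdentities s t} |
      rowCell s t u u c = p} ≤ 2 := by
    intro p
    refine (card_le_card fun c hc => ?_).trans (card_le_two (a := p.2) (b := s.mul (s.inv u) p.2))
    rcases rowCell_eq_or s t u u c with hc' | hc' <;> rw [(mem_filter.1 hc).2] at hc' <;> subst hc'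
    · simp
    · let _ := s
      simp only [mem_insert, mem_singleton]
      exact Or.inr (inv_mul_cancel_left u c).symm
  have := card_le_mul_card_image_of_maps_to
    (t := {p ∈ interiorDisagreements s t | p.1 ∈ ({u} : Finset G)}) (fun c hc => by
      simpa using rowCell_mem h hu hu huu hsp (mem_filter.1 hc).1 (mem_filter.1 hc).2) 2
    (fun p _ => hfib p)
  rw [card_compl_nonIdentities s t h] at hW
  omega

theorem card_nonIdentities_le_card_rows_of_diag (h : s.one ≠ t.one) {u w : G}
    (hu : u ∈ nonIdentities s t) (hw : w ∈ nonIdentities s t) (hne : u ≠ w)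
    (huu : s.mul u u = t.mul u u) (hsu : s.mul u u ∉ nonIdentities s t)
    (hww : s.mul w w = t.mul w w) (hsw : s.mul w w ∉ nonIdentities s t) :
    #(nonIdentities s t) ≤
      #{p ∈ interiorDisagreements s t | p.1 ∈ ({u, w} : Finset G)} + 2 := by
  have hrow_u := card_nonIdentities_le_two_mul_card_row h hu huu hsu
  have hrow_w := card_nonIdentities_le_two_mul_card_row h hw hww hsw
  have : #{p ∈ interiorDisagreements s t | p.1 ∈ ({u} : Finset G)} +
      #{p ∈ interiorDisagreements s t | p.1 ∈ ({w} : Finset G)} =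
      #{p ∈ interiorDisagreements s t | p.1 ∈ ({u, w} : Finset G)} := by
    rw [← card_union_of_disjoint (disjoint_filter.2 fun p _ hpu hpw => hne (by simp_all)),
      ← filter_or]
    simp only [mem_insert, mem_singleton]
  omega

theorem two_mul_card_nonIdentities_le_of_rows_cols {u v : G}
    (hrow : #(nonIdentities s t) ≤
      #{p ∈ interiorDisagreements s t | p.1 ∈ ({u, v} : Finset G)} + 2)
    (hcol : #(nonIdentities s t) ≤
      #{p ∈ interiorDisagreements s t | p.2 ∈ ({u, v} : Finset G)} + 2) :
    2 * #(nonIdentities s t) ≤ #(interiorDisagreements s t) + 8 := by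
  have := card_filter_fst_mem_add_card_filter_snd_mem_le (interiorDisagreements s t) {u, v}
  have := Nat.mul_le_mul (card_le_two (a := u) (b := v)) (card_le_two (a := u) (b := v))
  omega

theorem two_mul_card_nonIdentities_le_of_agree (h : s.one ≠ t.one) {u v : G}
    (hu : u ∈ nonIdentities s t) (hv : v ∈ nonIdentities s t) (hne : u ≠ v)
    (huv : s.mul u v = t.mul u v) (hsp : s.mul u v ∉ nonIdentities s t) :
    2 * #(nonIdentities s t) ≤ #(interiorDisagreements s t) + 8 := by
  have hcol := card_nonIdentities_le_card_rows (s := opposite s) (t := opposite t) h hv hu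
    hne.symm huv hsp
  rw [card_filter_fst_interiorDisagreements_opposite, pair_comm] at hcol
  exact two_mul_card_nonIdentities_le_of_rows_cols
    (card_nonIdentities_le_card_rows h hu hv hne huv hsp) hcol

theorem two_mul_card_nonIdentities_le_of_agree_diag (h : s.one ≠ t.one) {u w : G}
    (hu : u ∈ nonIdentities s t) (hw : w ∈ nonIdentities s t) (hne : u ≠ w)
    (huu : s.mul u u = t.mul u u) (hsu : s.mul u u ∉ nonIdentities s t)
    (hww : s.mul w w = t.mul w w) (hsw : s.mul w w ∉ nonIdentities s t) :
    2 * #(nonIdentities s t) ≤ #(interiorDisagreements s t) + 8 := by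
  have hcol := card_nonIdentities_le_card_rows_of_diag (s := opposite s) (t := opposite t) h hu hw
    hne huu hsu hww hsw
  rw [card_filter_fst_interiorDisagreements_opposite] at hcol
  exact two_mul_card_nonIdentities_le_of_rows_cols
    (card_nonIdentities_le_card_rows_of_diag h hu hw hne huu hsu hww hsw) hcol

theorem card_nonIdentities_le_card_filter_mul_eq (h : s.one ≠ t.one) (x : G) :
    #(nonIdentities s t) ≤
      #{p ∈ nonIdentities s t ×ˢ nonIdentities s t | s.mul p.1 p.2 = x} + 2 := by
  have hσ : (fun a => s.mul (s.inv a) x).Injective := by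
    let _ := s
    exact fun a b hab => inv_injective (mul_right_cancel hab)
  have hW := card_le_card_filter_map_mem_add_card_compl hσ (nonIdentities s t)
  have := card_le_card_of_injOn (fun a => (a, s.mul (s.inv a) x))
    (s := {a ∈ nonIdentities s t | s.mul (s.inv a) x ∈ nonIdentities s t})
    (t := {p ∈ nonIdentities s t ×ˢ nonIdentities s t | s.mul p.1 p.2 = x})
    (fun a ha => by
      let _ := s
      simp only [mem_coe, mem_filter, mem_product] at ha ⊢
      exact ⟨ha, mul_inv_cancel_left a x⟩)
    (fun a _ b _ hab => (Prod.mk.inj hab).1)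
  rw [card_compl_nonIdentities s t h] at hW
  omega

theorem two_mul_card_nonIdentities_le_card_filter_mul_notMem (h : s.one ≠ t.one) :
    2 * #(nonIdentities s t) ≤
      #{p ∈ nonIdentities s t ×ˢ nonIdentities s t |
        s.mul p.1 p.2 ∉ nonIdentities s t} + 4 := by
  have he := card_nonIdentities_le_card_filter_mul_eq h s.one
  have hf := card_nonIdentities_le_card_filter_mul_eq h t.one
  have := card_le_card
    (s := {p ∈ nonIdentities s t ×ˢ nonIdentities s t | s.mul p.1 p.2 = s.one} ∪
      {p ∈ nonIdentities s t ×ˢ nonIdentities s t | s.mul p.1 p.2 = t.one})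
    (t := {p ∈ nonIdentities s t ×ˢ nonIdentities s t | s.mul p.1 p.2 ∉ nonIdentities s t})
    (fun p hp => by simp only [mem_union, mem_filter, mem_nonIdentities] at hp ⊢; aesop)
  rw [card_union_of_disjoint (disjoint_filter.2 fun p _ he hf => h (he.symm.trans hf))] at this
  omega

theorem two_mul_card_nonIdentities_le (h : s.one ≠ t.one) :
    2 * #(nonIdentities s t) ≤ #(interiorDisagreements s t) + 8 := by
  have hS := two_mul_card_nonIdentities_le_card_filter_mul_notMem h
  set I := nonIdentities s t
  set S := {p ∈ I ×ˢ I | s.mul p.1 p.2 ∉ I}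
  by_cases hoff : ∃ p ∈ S, s.mul p.1 p.2 = t.mul p.1 p.2 ∧ p.1 ≠ p.2
  · obtain ⟨⟨u, v⟩, hp, huv, hne⟩ := hoff
    simp only [S, mem_filter, mem_product] at hp
    exact two_mul_card_nonIdentities_le_of_agree h hp.1.1 hp.1.2 hne huv hp.2
  push Not at hoff
  by_cases hA : 1 < #{p ∈ S | s.mul p.1 p.2 = t.mul p.1 p.2}
  · obtain ⟨⟨u, u'⟩, hp, ⟨w, w'⟩, hq, hpq⟩ := one_lt_card.1 hA
    simp only [mem_filter] at hp hq
    obtain rfl : u = u' := hoff _ hp.1 hp.2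
    obtain rfl : w = w' := hoff _ hq.1 hq.2
    simp only [S, mem_filter, mem_product] at hp hq
    exact two_mul_card_nonIdentities_le_of_agree_diag h hp.1.1.1 hq.1.1.1 (by simpa using hpq)
      hp.2 hp.1.2 hq.2 hq.1.2
  have hsub : {p ∈ S | ¬ s.mul p.1 p.2 = t.mul p.1 p.2} ⊆ interiorDisagreements s t :=
    fun p hp => mem_inter.2
      ⟨(mem_disagreements s t).2 (mem_filter.1 hp).2, (mem_filter.1 (mem_filter.1 hp).1).1⟩
  have := card_filter_add_card_filter_not (s := S) (fun p => s.mul p.1 p.2 = t.mul p.1 p.2)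
  have := card_le_card hsub
  omega

theorem six_mul_card_le_card_disagreements_add (h : s.one ≠ t.one) :
    6 * Fintype.card G ≤ #(disagreements s t) + 16 := by
  have hI := card_nonIdentities_add_two s t h
  have hint := two_mul_card_nonIdentities_le h
  set I := nonIdentities s t
  have hcross : #(I ×ˢ I)ᶜ = 4 * #I + 4 := by
    rw [card_compl, Fintype.card_prod, card_product, ← hI]
    exact Nat.sub_eq_of_eq_add (by ring)
  have hsplit : #(interiorDisagreements s t) + #(I ×ˢ I)ᶜ ≤ #(disagreements s t) := by
    have hdisj : Disjoint (interiorDisagreements s t) (I ×ˢ I)ᶜ :=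
      disjoint_left.2 fun p hp hc => mem_compl.1 hc (mem_inter.1 hp).2
    rw [← card_union_of_disjoint hdisj]
    refine card_le_card (union_subset inter_subset_left fun p hp => ?_)
    rw [mem_compl, mem_product, not_and_or] at hp
    rcases hp with hp | hp
    · exact mk_mem_disagreements_of_notMem_left s t h hp p.2
    · exact mk_mem_disagreements_of_notMem_right s t h hp p.1
  omega

end Finite

end GroupTable

theorem same_identity_of_close_general {G : Type*} [Fintype G] [DecidableEq G]
    (s t : Group G)
    (hdist : (Finset.univ.filter fun p : G × G => s.mul p.1 p.2 ≠ t.mul p.1 p.2).card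
      ≤ 6 * Fintype.card G - 18) :
    s.one = t.one := by
  by_contra h
  have hlow := GroupTable.six_mul_card_le_card_disagreements_add h
  have hpos : 0 < #(GroupTable.disagreements s t) :=
    card_pos.2
      ⟨_, GroupTable.mk_mem_disagreements_of_notMem_left s t h (a := t.one) (by simp) s.one⟩
  change #(GroupTable.disagreements s t) ≤ _ at hdist
  omega

theorem same_identity_of_close {G : Type*} [Fintype G] [DecidableEq G]
    (s t : Group G) (hn : 7 < Fintype.card G)
    (hiso : ∃ e : G ≃ G, ∀ a b : G, e (s.mul a b) = t.mul (e a) (e b))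
    (hdist : (Finset.univ.filter fun p : G × G => s.mul p.1 p.2 ≠ t.mul p.1 p.2).card
      ≤ 6 * Fintype.card G - 18) :
    s.one = t.one :=
  same_identity_of_close_general s t hdist
end

section
/- Let G(∘) and G(∗) be two group structures on a finite set G with identities e ≠ f, and suppose a ∈ G \ {e,f} satisfies a⁻¹ = a^∗ (its inverses in the two groups coincide). Then d(a) ≥ 4, where d(g) = |{h ∈ G : g∘h ≠ g∗h}|. -/
/-!
Left multiplication by `a` is injective in both groups, and any two distinct points `x ≠ y`
with `a ∘ x = a ∗ y` both lie in `{h | a ∘ h ≠ a ∗ h}`. Writing `b = a⁻¹ = a^∗`, there are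
two such pairs: `a ∘ e = a = a ∗ f` and `a ∘ (b ∘ f) = f = a ∗ b`, and the four points
`e, f, b ∘ f, b` are distinct.
-/

section

open Function Finset

variable {α β : Type*}

theorem apply_ne_of_apply_eq_of_ne {p q : α → β} (hq : Injective q) {x y : α}
    (h : p x = q y) (hxy : x ≠ y) : p x ≠ q x :=
  h ▸ hq.ne hxy.symm

theorem four_le_card_filter_apply_ne [Fintype α] [DecidableEq α] [DecidableEq β]
    {p q : α → β} (hp : Injective p) (hq : Injective q) {x y z w : α}
    (hxy : p x = q y) (hzw : p z = q w)
    (hxz : p x ≠ p z) (hxy' : x ≠ y) (hzw' : z ≠ w) (hxw : x ≠ w) (hyz : y ≠ z) :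
    4 ≤ #{h | p h ≠ q h} := by
  have hyw : y ≠ w := ne_of_apply_ne q (hxy ▸ hzw ▸ hxz)
  have hmem {u v : α} (huv : p u = q v) (hne : u ≠ v) : p u ≠ q u ∧ p v ≠ q v :=
    ⟨apply_ne_of_apply_eq_of_ne hq huv hne,
      (apply_ne_of_apply_eq_of_ne hp huv.symm hne.symm).symm⟩
  have hsub : ({x, y, z, w} : Finset α) ⊆ ({h | p h ≠ q h} : Finset α) := by
    simp only [insert_subset_iff, singleton_subset_iff, mem_filter, mem_univ, true_and]
    exact ⟨(hmem hxy hxy').1, (hmem hxy hxy').2, (hmem hzw hzw').1, (hmem hzw hzw').2⟩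
  calc 4 = #({x, y, z, w} : Finset α) :=
        (card_eq_four.mpr
          ⟨x, y, z, w, hxy', ne_of_apply_ne p hxz, hxw, hyz, hyw, hzw', rfl⟩).symm
    _ ≤ _ := card_le_card hsub

end

theorem d_ge_four_of_common_inverse {G : Type*} [Fintype G] [DecidableEq G]
    (s t : Group G) (hef : s.one ≠ t.one)
    (a : G) (ha₁ : a ≠ s.one) (ha₂ : a ≠ t.one)
    (hinv : s.inv a = t.inv a) :
    4 ≤ (Finset.univ.filter fun h : G => s.mul a h ≠ t.mul a h).card := by
  have hs : Function.Injective (s.mul a) := by let _ := s; exact mul_right_injective a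
  have ht : Function.Injective (t.mul a) := by let _ := t; exact mul_right_injective a
  have hse : s.mul a s.one = a := by let _ := s; exact mul_one a
  have hte : t.mul a t.one = a := by let _ := t; exact mul_one a
  have hsinv : s.mul a (s.mul (s.inv a) t.one) = t.one := by
    let _ := s; exact mul_inv_cancel_left a t.one
  have htinv : t.mul a (s.inv a) = t.one := by rw [hinv]; let _ := t; exact mul_inv_cancel a
  have hbf_ne_b : s.mul (s.inv a) t.one ≠ s.inv a := by let _ := s; exact mul_ne_left.mpr hef.symm
  have he_ne_b : s.one ≠ s.inv a := by let _ := s; exact fun h => ha₁ (inv_eq_one.mp h.symm)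
  have hf_ne_bf : t.one ≠ s.mul (s.inv a) t.one := by
    let _ := s; exact right_ne_mul.mpr fun h => ha₁ (inv_eq_one.mp h)
  exact four_le_card_filter_apply_ne hs ht (hse.trans hte.symm) (hsinv.trans htinv.symm)
    (by rwa [hse, hsinv]) hef hbf_ne_b he_ne_b hf_ne_bf
end

section
/- Let h be a generator of a cyclic group of prime order p, and let 0 < i₀ < i₁ < i₂ < i₃ < p be four indices. There exists a 3-element subset Y of {h^{i₀}, h^{i₁}, h^{i₂}, h^{i₃}} with Y ∩ hY = ∅ if and only if it is not the case that both i₁ = i₀ + 1 and i₃ = i₂ + 1. -/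
/-!
Since `h` has order `p`, the powers `h ^ n` with `0 < n ≤ p` are pairwise distinct, so
`h * h ^ i = h ^ (i + 1)` lies in the four-point set only when `i` and `i + 1` are both indices.
If `i₁ = i₀ + 1` and `i₃ = i₂ + 1`, any three of the four points contain one of the pairs
`{h ^ i₀, h * h ^ i₀}`, `{h ^ i₂, h * h ^ i₂}`. Otherwise one of these pairs is not consecutive,
and dropping `h ^ i₁` or `h ^ i₂` leaves three exponents no two of which are consecutive.
-/

open Finset

theorem pow_injOn_Ioc_orderOf {G : Type*} [Monoid G] (h : G) :
    (Set.Ioc 0 (orderOf h)).InjOn (h ^ ·) := by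
  intro a ha b hb (hab : h ^ a = h ^ b)
  obtain ⟨ha0, han⟩ := ha
  obtain ⟨hb0, hbn⟩ := hb
  -- Multiplying by `h ^ (orderOf h - 1)` shifts both exponents down by one, into `Iio (orderOf h)`.
  have hshift : ∀ m, 0 < m → h ^ m * h ^ (orderOf h - 1) = h ^ (m - 1) := fun m hm => by
    rw [← pow_add, show m + (orderOf h - 1) = m - 1 + orderOf h by omega, pow_add,
      pow_orderOf_eq_one, mul_one]
  have hpred : h ^ (a - 1) = h ^ (b - 1) := by
    rw [← hshift a ha0, ← hshift b hb0, hab]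
  have := pow_injOn_Iio_orderOf (x := h) (Set.mem_Iio.2 (by omega))
    (Set.mem_Iio.2 (by omega)) hpred
  omega

theorem exists_mem_apply_mem_of_three_le_card {α : Type*} [DecidableEq α] {s : α → α} {x z : α}
    {Y : Finset α} (hY : Y ⊆ {x, s x, z, s z}) (h3 : 3 ≤ #Y) : ∃ y ∈ Y, s y ∈ Y := by
  by_contra! hfree
  have hpair : Y ⊆ {if x ∈ Y then x else s x, if z ∈ Y then z else s z} := by
    intro y hy
    have := hY hy
    simp only [mem_insert, mem_singleton] at this ⊢
    rcases this with rfl | rfl | rfl | rfl <;> grind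
  have := (card_le_card hpair).trans card_le_two
  omega

theorem card_eq_three_and_mul_notMem_of_pow {G : Type*} [Monoid G] [DecidableEq G] {h : G}
    {a b c : ℕ} (ha : 0 < a) (hab : a + 1 < b) (hbc : b + 1 < c) (hc : c < orderOf h) :
    #({h ^ a, h ^ b, h ^ c} : Finset G) = 3 ∧
      ∀ y ∈ ({h ^ a, h ^ b, h ^ c} : Finset G), h * y ∉ ({h ^ a, h ^ b, h ^ c} : Finset G) := by
  set E : Finset ℕ := {a, b, c}
  have himage : ({h ^ a, h ^ b, h ^ c} : Finset G) = E.image (h ^ ·) := by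
    simp [E]
  have hsub : ∀ m ∈ E, m ∈ Set.Ioc 0 (orderOf h) ∧ m + 1 ∈ Set.Ioc 0 (orderOf h) := by
    intro m hm
    simp only [E, mem_insert, mem_singleton] at hm
    simp only [Set.mem_Ioc]
    omega
  rw [himage]
  refine ⟨?_, ?_⟩
  · rw [card_image_of_injOn fun m hm k hk => pow_injOn_Ioc_orderOf h (hsub m hm).1 (hsub k hk).1]
    simp only [E]
    rw [card_eq_three]
    exact ⟨a, b, c, by omega, by omega, by omega, rfl⟩
  · simp only [mem_image, not_exists, not_and]
    rintro _ ⟨m, hm, rfl⟩ k hk hkm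
    rw [← pow_succ'] at hkm
    have := pow_injOn_Ioc_orderOf h (hsub k hk).1 (hsub m hm).2 hkm
    simp only [E, mem_insert, mem_singleton] at hm hk
    omega

theorem three_subset_iff_general {G : Type*} [Group G] [Fintype G] [DecidableEq G]
    (p : ℕ) (hcard : Fintype.card G = p)
    (h : G) (hgen : ∀ x : G, x ∈ Subgroup.zpowers h)
    (i₀ i₁ i₂ i₃ : ℕ)
    (h0 : 0 < i₀) (h01 : i₀ < i₁) (h12 : i₁ < i₂) (h23 : i₂ < i₃) (h3p : i₃ < p) :
    (∃ Y : Finset G, Y ⊆ {h ^ i₀, h ^ i₁, h ^ i₂, h ^ i₃} ∧ Y.card = 3 ∧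
        ∀ y ∈ Y, h * y ∉ Y) ↔
      ¬(i₁ = i₀ + 1 ∧ i₃ = i₂ + 1) := by
  have hord : orderOf h = p := by
    rw [orderOf_eq_card_of_forall_mem_zpowers hgen, Nat.card_eq_fintype_card, hcard]
  constructor
  · rintro ⟨Y, hY, hY3, hfree⟩ ⟨rfl, rfl⟩
    simp only [pow_succ'] at hY
    obtain ⟨y, hy, hhy⟩ := exists_mem_apply_mem_of_three_le_card hY hY3.ge
    exact hfree y hy hhy
  · intro hne
    rw [← hord] at h3p
    by_cases h01' : i₁ = i₀ + 1
    · refine ⟨{h ^ i₀, h ^ i₂, h ^ i₃}, ?_,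
        card_eq_three_and_mul_notMem_of_pow h0 (by omega) (by omega) h3p⟩
      exact insert_subset_insert _ (subset_insert _ _)
    · refine ⟨{h ^ i₀, h ^ i₁, h ^ i₃}, ?_,
        card_eq_three_and_mul_notMem_of_pow h0 (by omega) (by omega) h3p⟩
      exact insert_subset_insert _ (insert_subset_insert _ (subset_insert _ _))

theorem three_subset_iff {G : Type*} [Group G] [Fintype G] [DecidableEq G]
    (p : ℕ) (hp : p.Prime) (hcard : Fintype.card G = p)
    (h : G) (hgen : ∀ x : G, x ∈ Subgroup.zpowers h)
    (i₀ i₁ i₂ i₃ : ℕ)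
    (h0 : 0 < i₀) (h01 : i₀ < i₁) (h12 : i₁ < i₂) (h23 : i₂ < i₃) (h3p : i₃ < p) :
    (∃ Y : Finset G, Y ⊆ {h ^ i₀, h ^ i₁, h ^ i₂, h ^ i₃} ∧ Y.card = 3 ∧
        ∀ y ∈ Y, h * y ∉ Y) ↔
      ¬(i₁ = i₀ + 1 ∧ i₃ = i₂ + 1) :=
  three_subset_iff_general p hcard h hgen i₀ i₁ i₂ i₃ h0 h01 h12 h23 h3p
end

section
/- The Cayley stability of the cyclic group ℤ₃ is 9; that is, any two distinct group structures on a 3-element set differ at all 9 pairs, and there exist two distinct group structures on a 3-element set. -/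
/-!
Call `(a, b, c)` a line when `AllEqualOrDistinct a b c`; on a 3-element set the
third point of a line is determined by the other two. In a group of order 3 with identity `e`,
`a * b * c = e` for every line `(a, b, c)`, and `(e, c, c⁻¹)` is a line, so `a * b` is the third
point of the line through `e` and the third point of `a, b`. Hence the value of `a * b` at any
single pair determines `e`, and `e` determines the whole multiplication: two distinct group
structures differ everywhere.
-/

open Function

def AllEqualOrDistinct {α : Type*} (a b c : α) : Prop :=
  (a = b ∧ b = c) ∨ (a ≠ b ∧ b ≠ c ∧ a ≠ c)

instance {α : Type*} [DecidableEq α] (a b c : α) : Decidable (AllEqualOrDistinct a b c) :=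
  inferInstanceAs (Decidable (_ ∨ _))

section AllEqualOrDistinct

variable {α : Type*} {a b c c' : α}

theorem allEqualOrDistinct_comm : AllEqualOrDistinct a b c ↔ AllEqualOrDistinct c b a := by
  unfold AllEqualOrDistinct
  grind

theorem allEqualOrDistinct_map_iff {β : Type*} {f : α → β} (hf : Injective f) :
    AllEqualOrDistinct (f a) (f b) (f c) ↔ AllEqualOrDistinct a b c := by
  simp only [AllEqualOrDistinct, hf.eq_iff, hf.ne_iff]

variable [Fintype α]

theorem exists_allEqualOrDistinct (h : Fintype.card α = 3) (a b : α) :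
    ∃ c, AllEqualOrDistinct a b c := by
  let e := Fintype.equivFinOfCardEq h
  obtain ⟨c, hc⟩ : ∃ c, AllEqualOrDistinct (e a) (e b) c := by
    generalize e a = x, e b = y
    revert x y
    decide
  exact ⟨e.symm c, by rwa [← allEqualOrDistinct_map_iff e.injective, e.apply_symm_apply]⟩

theorem AllEqualOrDistinct.right_unique (h : Fintype.card α = 3) (hc : AllEqualOrDistinct a b c)
    (hc' : AllEqualOrDistinct a b c') : c = c' := by
  let e := Fintype.equivFinOfCardEq h
  rw [← allEqualOrDistinct_map_iff e.injective] at hc hc'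
  apply e.injective
  generalize e a = x, e b = y, e c = z, e c' = z' at hc hc'
  revert x y z z'
  decide

end AllEqualOrDistinct

theorem allEqualOrDistinct_one_mul {G : Type*} [Group G] [Fintype G] (h : Fintype.card G = 3)
    {a b c : G} (habc : AllEqualOrDistinct a b c) : AllEqualOrDistinct 1 c (a * b) := by
  -- In `ZMod 3` the lines are exactly the triples with `a + b + c = 0`.
  let e : G ≃* Multiplicative (ZMod 3) :=
    mulEquivOfPrimeCardEq (by rw [Nat.card_eq_fintype_card, h]) (by simp)
  rw [← allEqualOrDistinct_map_iff e.injective] at habc ⊢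
  rw [map_one, map_mul]
  generalize e a = x, e b = y, e c = z at habc ⊢
  revert x y z
  decide

theorem Group.mul_eq_mul_iff_one_eq {G : Type*} [Fintype G] (h : Fintype.card G = 3)
    (s t : Group G) (a b : G) : s.mul a b = t.mul a b ↔ s.one = t.one := by
  obtain ⟨c, hc⟩ := exists_allEqualOrDistinct h a b
  have hs : AllEqualOrDistinct s.one c (s.mul a b) := by
    let := s; exact allEqualOrDistinct_one_mul h hc
  have ht : AllEqualOrDistinct t.one c (t.mul a b) := by
    let := t; exact allEqualOrDistinct_one_mul h hc
  constructor
  · intro hab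
    rw [allEqualOrDistinct_comm] at hs ht
    exact (hab ▸ hs).right_unique h ht
  · intro hone
    exact (hone ▸ hs).right_unique h ht

theorem exists_group_one_ne {G H : Type*} [Group H] [DecidableEq G] [Nontrivial G] (e : G ≃ H) :
    ∃ s t : Group G, s.one ≠ t.one := by
  obtain ⟨b, hb⟩ := exists_ne (e.symm 1)
  refine ⟨e.group, ((Equiv.swap (e.symm 1) b).trans e).group, ?_⟩
  change e.symm 1 ≠ Equiv.swap (e.symm 1) b (e.symm 1)
  rw [Equiv.swap_apply_left]
  exact hb.symm

theorem stability_order_three {G : Type*} [Fintype G] [DecidableEq G]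
    (hcard : Fintype.card G = 3) :
    (∀ s t : Group G, s.mul ≠ t.mul →
        (Finset.univ.filter fun p : G × G => s.mul p.1 p.2 ≠ t.mul p.1 p.2).card = 9) ∧
    ∃ s t : Group G, s.mul ≠ t.mul := by
  refine ⟨fun s t hne => ?_, ?_⟩
  · have hdiff : ∀ p ∈ (Finset.univ : Finset (G × G)), s.mul p.1 p.2 ≠ t.mul p.1 p.2 :=
      fun p _ hp => hne <| funext₂ fun a b =>
        (Group.mul_eq_mul_iff_one_eq hcard s t a b).2
          ((Group.mul_eq_mul_iff_one_eq hcard s t p.1 p.2).1 hp)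
    rw [Finset.filter_true_of_mem hdiff, Finset.card_univ, Fintype.card_prod, hcard]
  · have : Nontrivial G := Fintype.one_lt_card_iff_nontrivial.mp (by omega)
    obtain ⟨s, t, hst⟩ := exists_group_one_ne
      (Fintype.equivOfCardEq (by simp [hcard]) : G ≃ Multiplicative (ZMod 3))
    exact ⟨s, t, fun hmul => hst ((Group.mul_eq_mul_iff_one_eq hcard s t s.one s.one).1
      (by rw [hmul]))⟩
end
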